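/- arXiv:1705.05295 — 2 statements merged into one kernel-verified Lean document; each statement's English description precedes it below -/
import Mathlib

section
/- Let T1, T2 be two trees on the same label set 𝒳. Then MASTRL({T1, T2}) = d_LR(T1, T2). Moreover, every leaf-disagreement (𝒳1', 𝒳2') for {T1, T2} of minimum size satisfies 𝒳1' ∩ 𝒳2' = ∅ and is obtained by partitioning into two parts a label-disagreement 𝒳' = 𝒳1' ∪ 𝒳2' for {T1, T2} of size d_LR(T1, T2). -/
/-!
Common framework: rooted binary trees with leaves bijectively labeled by a
finite label set, leaf removal, restriction, the leaf-removal distance `d_LR`,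
compatibility, leaf-disagreements, triplets, LPR moves, etc.
-/

universe u

/-- A rooted binary tree whose leaves carry labels from `α`. -/
inductive LTree (α : Type u) : Type u where
  | leaf : α → LTree α
  | node : LTree α → LTree α → LTree α

namespace LTree

variable {α : Type u} [DecidableEq α]

/-- The set of leaf labels of a tree. -/
def labels : LTree α → Finset α
  | leaf a => {a}
  | node l r => labels l ∪ labels r

/-- A tree is `Good` when its leaves carry pairwise distinct labels
(i.e. the leaves are bijectively labeled). -/
def Good : LTree α → Prop
  | leaf _ => True
  | node l r => Good l ∧ Good r ∧ Disjoint (labels l) (labels r)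

/-- `T` is a (rooted binary, uniquely leaf-labeled) tree on label set `𝒳`. -/
def IsTreeOn (T : LTree α) (𝒳 : Finset α) : Prop :=
  Good T ∧ labels T = 𝒳

/-- Equality of rooted trees: children of a node are unordered. -/
inductive Iso : LTree α → LTree α → Prop
  | leaf (a : α) : Iso (leaf a) (leaf a)
  | node {l₁ r₁ l₂ r₂ : LTree α} :
      Iso l₁ l₂ → Iso r₁ r₂ → Iso (node l₁ r₁) (node l₂ r₂)
  | swap {l₁ r₁ l₂ r₂ : LTree α} :
      Iso l₁ r₂ → Iso r₁ l₂ → Iso (node l₁ r₁) (node l₂ r₂)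

/-- Equality of possibly empty trees (`none` is the empty tree). -/
def OptIso : Option (LTree α) → Option (LTree α) → Prop
  | none, none => True
  | some t₁, some t₂ => Iso t₁ t₂
  | _, _ => False

/-- Restriction `T|_S`: keep exactly the leaves with labels in `S`, suppressing
the resulting degree-two vertices and degree-one roots; the result is `none`
when no leaf survives. -/
def restrict : LTree α → Finset α → Option (LTree α)
  | leaf a, S => if a ∈ S then some (leaf a) else none
  | node l r, S =>
    match restrict l S, restrict r S with
    | some l', some r' => some (node l' r')
    | some l', none => some l'
    | none, some r' => some r'
    | none, none => none

/-- `T − X`: remove from `T` every leaf whose label lies in `X`. -/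
def remove (T : LTree α) (X : Finset α) : Option (LTree α) :=
  restrict T (labels T \ X)

/-- The leaf-removal distance `d_LR(T₁,T₂)`: the minimum number of labels
whose removal makes the two trees equal. -/
noncomputable def dLR (T₁ T₂ : LTree α) : ℕ :=
  sInf {n | ∃ X : Finset α, X ⊆ labels T₁ ∪ labels T₂ ∧ X.card = n ∧
    OptIso (remove T₁ X) (remove T₂ X)}

def labelsO : Option (LTree α) → Finset α
  | none => ∅
  | some t => labels t

def GoodO : Option (LTree α) → Prop
  | none => True
  | some t => Good t

def restrictO : Option (LTree α) → Finset α → Option (LTree α)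
  | none, _ => none
  | some t, S => restrict t S

/-- A family of (possibly empty) trees is compatible if there is a single tree,
on the union of their label sets, which displays all of them. -/
def CompatibleFamO {ι : Type*} (f : ι → Option (LTree α)) : Prop :=
  ∃ TO : Option (LTree α), GoodO TO ∧
    (↑(labelsO TO) : Set α) = (⋃ i, ↑(labelsO (f i))) ∧
    ∀ i, OptIso (restrictO TO (labelsO (f i))) (f i)

/-- A family of trees is compatible if a single tree displays all of them. -/
def CompatibleFam {ι : Type*} (𝒯 : ι → LTree α) : Prop :=
  CompatibleFamO fun i => some (𝒯 i)

/-- `X` is a leaf-disagreement for the family `𝒯`: removing `X i` from `𝒯 i`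
yields a compatible family. -/
def IsLeafDisagreement {ι : Type*} (𝒯 : ι → LTree α) (X : ι → Finset α) : Prop :=
  CompatibleFamO fun i => remove (𝒯 i) (X i)

/-- `X'` is a label-disagreement for the family `𝒯`. -/
def IsLabelDisagreement {ι : Type*} (𝒯 : ι → LTree α) (X' : Finset α) : Prop :=
  CompatibleFamO fun i => remove (𝒯 i) X'

/-- `MASTRL 𝒯`: the minimum size of a leaf-disagreement for `𝒯`. -/
noncomputable def MASTRL {t : ℕ} (𝒯 : Fin t → LTree α) : ℕ :=
  sInf {v | ∃ X : Fin t → Finset α, (∀ i, X i ⊆ labels (𝒯 i)) ∧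
    (∑ i, (X i).card) = v ∧ IsLeafDisagreement 𝒯 X}

/-- The triplet `ab|c` (as a tree). -/
def tripletTree (a b c : α) : LTree α := node (node (leaf a) (leaf b)) (leaf c)

/-- A rooted triplet: a tree with exactly three (distinctly labeled) leaves. -/
def IsTriplet (R : LTree α) : Prop := Good R ∧ (labels R).card = 3

/-- `ab|c` is a triplet of `T`, i.e. `T|_{a,b,c} = ab|c`. -/
def IsTripletOf (T : LTree α) (a b c : α) : Prop :=
  OptIso (restrict T {a, b, c}) (some (tripletTree a b c))

/-- `tr(T)`: the triplet decomposition of `T`. -/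
def trSet (T : LTree α) : Set (LTree α) :=
  {R | ∃ a b c : α, R = tripletTree a b c ∧ IsTripletOf T a b c}

/-- A set of trees is compatible: some tree on the union of the label sets
displays every member. -/
def CompatibleSet (S : Set (LTree α)) : Prop :=
  ∃ TO : Option (LTree α), GoodO TO ∧
    (↑(labelsO TO) : Set α) = (⋃ R ∈ S, ↑(labels R)) ∧
    ∀ R ∈ S, OptIso (restrictO TO (labels R)) (some R)

/-- `MINRTI ℛ`: the minimum number of triplets to delete from `ℛ` so that the
remaining triplets are compatible. -/
noncomputable def MINRTI {t : ℕ} (R : Fin t → LTree α) : ℕ :=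
  sInf {m | ∃ s : Finset (Fin t), s.card = m ∧
    CompatibleFam (fun i : {i : Fin t // i ∉ s} => R i.1)}

/-- Graft the leaf `x` at the position (edge) addressed by `p` in `T`.
The empty address grafts `x` above the root of `T` (the `⊥` case); the address
of an internal/leaf vertex `v` grafts `x` on the edge between `v` and its
parent.  `none` when the address is invalid. -/
def graftAt (x : α) : LTree α → List Bool → Option (LTree α)
  | T, [] => some (node (leaf x) T)
  | leaf _, _ :: _ => none
  | node l r, b :: p =>
    if b then (graftAt x l p).map (fun l' => node l' r)
    else (graftAt x r p).map (fun r' => node l r')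

/-- `T'` is obtained from `T` by a single LPR (leaf prune-and-regraft) move on
the leaf `x`: prune `x` from `T` and regraft it, either on an edge of
`T − {x}` or above its root. -/
def LPRStep (x : α) (T T' : LTree α) : Prop :=
  (remove T {x} = none ∧ T' = leaf x) ∨
  ∃ T₀ p, remove T {x} = some T₀ ∧ graftAt x T₀ p = some T'

/-- `TurnsInto L T T'`: the LPR sequence with (ordered) leaf list `L` turns
`T` into `T'`. -/
inductive TurnsInto : List α → LTree α → LTree α → Prop
  | nil {T T' : LTree α} : Iso T T' → TurnsInto [] T T'
  | cons {x : α} {xs : List α} {T T'' T' : LTree α} :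
      LPRStep x T T'' → TurnsInto xs T'' T' → TurnsInto (x :: xs) T T'

/-- `confset(T₁,T₂)`: the collection of 3-label sets `{a,b,c}` such that
`T₁` contains a triplet on `{a,b,c}` conflicting with a triplet of `T₂`. -/
def confset (T₁ T₂ : LTree α) : Set (Finset α) :=
  {s | ∃ a b c : α, s = {a, b, c} ∧ IsTripletOf T₁ a b c ∧
    (IsTripletOf T₂ a c b ∨ IsTripletOf T₂ b c a)}

/-- `X` is a minimal disagreement between `T₁` and `T₂`. -/
def MinimalDisagreement (T₁ T₂ : LTree α) (X : Finset α) : Prop :=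
  X ⊆ labels T₁ ∪ labels T₂ ∧
  OptIso (remove T₁ X) (remove T₂ X) ∧
  ∀ X' ⊂ X, ¬ OptIso (remove T₁ X') (remove T₂ X')

/-- `u` is (the rooted subtree hanging at) a node of `T`. -/
inductive IsSubtree : LTree α → LTree α → Prop
  | refl (T : LTree α) : IsSubtree T T
  | left {u l r : LTree α} : IsSubtree u l → IsSubtree u (node l r)
  | right {u l r : LTree α} : IsSubtree u r → IsSubtree u (node l r)

/-- `u` is the least common ancestor in `T` of the labels in `Z`. -/
def IsLCA (T : LTree α) (Z : Finset α) (u : LTree α) : Prop :=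
  IsSubtree u T ∧ Z ⊆ labels u ∧
    ∀ w, IsSubtree w T → Z ⊆ labels w → IsSubtree u w

end LTree

/-!
A leaf-disagreement `(X₁, X₂)` for two trees on `𝒳` is displayed by a tree `T`; restricting
`T` to `𝒳 \ (X₁ ∪ X₂)` shows `T₁ − (X₁ ∪ X₂) = T₂ − (X₁ ∪ X₂)`, so
`d_LR ≤ |X₁ ∪ X₂| ≤ |X₁| + |X₂|`. Conversely, if `T₁ − X = T₂ − X` then `T₂` itself displays
`T₁ − X` and `T₂`, so `(X, ∅)` is a leaf-disagreement and `MASTRL ≤ d_LR`. For a minimum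
leaf-disagreement both inequalities are equalities, which forces `X₁ ∩ X₂ = ∅`.
-/

namespace LTree

variable {α : Type u}

theorem Iso.refl (T : LTree α) : Iso T T := by
  induction T with
  | leaf a => exact Iso.leaf a
  | node _ _ ihl ihr => exact Iso.node ihl ihr

theorem Iso.symm {T T' : LTree α} (h : Iso T T') : Iso T' T := by
  induction h with
  | leaf a => exact Iso.leaf a
  | node _ _ ihl ihr => exact Iso.node ihl ihr
  | swap _ _ ihl ihr => exact Iso.swap ihr ihl

theorem Iso.trans {T₁ T₂ T₃ : LTree α} (h₁₂ : Iso T₁ T₂) (h₂₃ : Iso T₂ T₃) : Iso T₁ T₃ := by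
  induction h₁₂ generalizing T₃ with
  | leaf a => exact h₂₃
  | node _ _ ihl ihr =>
    cases h₂₃ with
    | node hl hr => exact Iso.node (ihl hl) (ihr hr)
    | swap hl hr => exact Iso.swap (ihl hl) (ihr hr)
  | swap _ _ ihl ihr =>
    cases h₂₃ with
    | node hl hr => exact Iso.swap (ihl hr) (ihr hl)
    | swap hl hr => exact Iso.node (ihl hr) (ihr hl)

theorem OptIso.refl : ∀ o : Option (LTree α), OptIso o o
  | none => trivial
  | some T => Iso.refl T

theorem OptIso.symm {o o' : Option (LTree α)} (h : OptIso o o') : OptIso o' o := by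
  cases o <;> cases o' <;> simp_all only [OptIso]
  exact h.symm

theorem OptIso.trans {o₁ o₂ o₃ : Option (LTree α)} (h₁₂ : OptIso o₁ o₂) (h₂₃ : OptIso o₂ o₃) :
    OptIso o₁ o₃ := by
  cases o₁ <;> cases o₂ <;> cases o₃ <;> simp_all only [OptIso]
  exact h₁₂.trans h₂₃

variable [DecidableEq α]

theorem restrict_empty (T : LTree α) : restrict T ∅ = none := by
  induction T <;> simp_all [restrict]

theorem labelsO_restrict (T : LTree α) (S : Finset α) :
    labelsO (restrict T S) = labels T ∩ S := by
  induction T with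
  | leaf a => by_cases h : a ∈ S <;> simp [restrict, labelsO, labels, h]
  | node l r ihl ihr =>
    rw [restrict, labels, Finset.union_inter_distrib_right, ← ihl, ← ihr]
    cases restrict l S <;> cases restrict r S <;> simp [labelsO, labels]

theorem labelsO_remove (T : LTree α) (X : Finset α) : labelsO (remove T X) = labels T \ X := by
  rw [remove, labelsO_restrict, Finset.inter_eq_right.2 Finset.sdiff_subset]

theorem goodO_restrict {T : LTree α} (hT : Good T) (S : Finset α) : GoodO (restrict T S) := by
  induction T with
  | leaf a => by_cases h : a ∈ S <;> simp [restrict, GoodO, Good, h]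
  | node l r ihl ihr =>
    obtain ⟨hl, hr, hdisj⟩ := hT
    have hdisjS : Disjoint (labelsO (restrict l S)) (labelsO (restrict r S)) := by
      rw [labelsO_restrict, labelsO_restrict]
      exact hdisj.mono Finset.inter_subset_left Finset.inter_subset_left
    have ihl := ihl hl
    have ihr := ihr hr
    rw [restrict]
    revert ihl ihr hdisjS
    cases restrict l S <;> cases restrict r S <;> simp_all [GoodO, Good, labelsO]

theorem restrictO_restrict (T : LTree α) (S S' : Finset α) :
    restrictO (restrict T S) S' = restrict T (S ∩ S') := by
  induction T with
  | leaf a => by_cases h : a ∈ S <;> by_cases h' : a ∈ S' <;> simp [restrict, restrictO, h, h']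
  | node l r ihl ihr =>
    rw [restrict, restrict, ← ihl, ← ihr]
    cases restrict l S <;> cases restrict r S <;> simp only [restrictO, restrict] <;>
      cases restrict _ S' <;> rfl

theorem restrictO_restrictO (o : Option (LTree α)) (S S' : Finset α) :
    restrictO (restrictO o S) S' = restrictO o (S ∩ S') := by
  cases o
  · rfl
  · exact restrictO_restrict _ S S'

theorem Iso.restrict {T T' : LTree α} (h : Iso T T') (S : Finset α) :
    OptIso (T.restrict S) (T'.restrict S) := by
  induction h with
  | leaf a => by_cases h : a ∈ S <;> simp [LTree.restrict, OptIso, h, Iso.leaf]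
  | @node l₁ r₁ l₂ r₂ _ _ ihl ihr =>
    rw [LTree.restrict, LTree.restrict]
    revert ihl ihr
    cases l₁.restrict S <;> cases r₁.restrict S <;> cases l₂.restrict S <;>
      cases r₂.restrict S <;> simp_all [OptIso, Iso.node]
  | @swap l₁ r₁ l₂ r₂ _ _ ihl ihr =>
    rw [LTree.restrict, LTree.restrict]
    revert ihl ihr
    cases l₁.restrict S <;> cases r₁.restrict S <;> cases l₂.restrict S <;>
      cases r₂.restrict S <;> simp_all [OptIso, Iso.swap]

theorem OptIso.restrictO {o o' : Option (LTree α)} (h : OptIso o o') (S : Finset α) :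
    OptIso (LTree.restrictO o S) (LTree.restrictO o' S) := by
  cases o <;> cases o' <;> simp_all only [OptIso, LTree.restrictO]
  exact h.restrict S

theorem restrictO_remove (T : LTree α) {Y Z : Finset α} (h : Y ⊆ Z) :
    restrictO (remove T Y) (labels T \ Z) = remove T Z := by
  rw [remove, restrictO_restrict, remove,
    Finset.inter_eq_right.2 (Finset.sdiff_subset_sdiff subset_rfl h)]

theorem exists_card_eq_dLR (T₁ T₂ : LTree α) :
    ∃ X ⊆ labels T₁ ∪ labels T₂, X.card = dLR T₁ T₂ ∧ OptIso (remove T₁ X) (remove T₂ X) := by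
  have hall : OptIso (remove T₁ (labels T₁ ∪ labels T₂)) (remove T₂ (labels T₁ ∪ labels T₂)) := by
    simp only [remove, Finset.sdiff_eq_empty_iff_subset.2
      Finset.subset_union_left, Finset.sdiff_eq_empty_iff_subset.2 Finset.subset_union_right,
      restrict_empty]
    trivial
  exact Nat.sInf_mem (s := {n | ∃ X ⊆ labels T₁ ∪ labels T₂, X.card = n ∧
    OptIso (remove T₁ X) (remove T₂ X)}) ⟨_, _, subset_rfl, rfl, hall⟩

theorem dLR_le {T₁ T₂ : LTree α} {X : Finset α} (hX : X ⊆ labels T₁ ∪ labels T₂)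
    (h : OptIso (remove T₁ X) (remove T₂ X)) : dLR T₁ T₂ ≤ X.card :=
  Nat.sInf_le ⟨X, hX, rfl, h⟩

theorem MASTRL_le {t : ℕ} {𝒯 : Fin t → LTree α} {X : Fin t → Finset α}
    (hX : ∀ i, X i ⊆ labels (𝒯 i)) (h : IsLeafDisagreement 𝒯 X) :
    MASTRL 𝒯 ≤ ∑ i, (X i).card :=
  Nat.sInf_le ⟨X, hX, rfl, h⟩

theorem isLeafDisagreement_labels {ι : Type*} (𝒯 : ι → LTree α) :
    IsLeafDisagreement 𝒯 fun i => labels (𝒯 i) := by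
  have hnone : ∀ i, remove (𝒯 i) (labels (𝒯 i)) = none := fun i => by
    rw [remove, Finset.sdiff_self, restrict_empty]
  refine ⟨none, trivial, ?_, fun i => ?_⟩ <;> simp [hnone, labelsO, restrictO, OptIso]

theorem exists_sum_card_eq_MASTRL {t : ℕ} (𝒯 : Fin t → LTree α) :
    ∃ X : Fin t → Finset α, (∀ i, X i ⊆ labels (𝒯 i)) ∧ ∑ i, (X i).card = MASTRL 𝒯 ∧
      IsLeafDisagreement 𝒯 X :=
  Nat.sInf_mem (s := {v | ∃ X : Fin t → Finset α, (∀ i, X i ⊆ labels (𝒯 i)) ∧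
    ∑ i, (X i).card = v ∧ IsLeafDisagreement 𝒯 X})
    ⟨_, _, fun _ => subset_rfl, rfl, isLeafDisagreement_labels 𝒯⟩

theorem IsLeafDisagreement.remove_iso_remove {ι : Type*} {𝒯 : ι → LTree α} {𝒳 : Finset α}
    {X : ι → Finset α} (hX : IsLeafDisagreement 𝒯 X) (hl : ∀ i, labels (𝒯 i) = 𝒳)
    {Z : Finset α} (hZ : ∀ i, X i ⊆ Z) (i j : ι) :
    OptIso (remove (𝒯 i) Z) (remove (𝒯 j) Z) := by
  obtain ⟨TO, -, -, hdisplay⟩ := hX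
  have hTO : ∀ k, OptIso (restrictO TO (𝒳 \ Z)) (remove (𝒯 k) Z) := fun k => by
    have hk := (hdisplay k).restrictO (labels (𝒯 k) \ Z)
    rwa [restrictO_restrictO, labelsO_remove,
      Finset.inter_eq_right.2 (Finset.sdiff_subset_sdiff subset_rfl (hZ k)),
      restrictO_remove _ (hZ k), hl k] at hk
  exact (hTO i).symm.trans (hTO j)

theorem isLeafDisagreement_of_iso {T₁ T₂ : LTree α} {X : Finset α} (hT₂ : Good T₂)
    (hl : labels T₁ = labels T₂) (h : OptIso (remove T₁ X) (remove T₂ X)) :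
    IsLeafDisagreement ![T₁, T₂] ![X, ∅] := by
  refine ⟨some T₂, hT₂, ?_, Fin.forall_fin_two.2 ⟨?_, ?_⟩⟩
  · ext a
    simp only [Set.mem_iUnion, Fin.exists_fin_two, Finset.mem_coe, Matrix.cons_val_zero,
      Matrix.cons_val_one, Matrix.cons_val_fin_one, labelsO_remove, hl]
    show a ∈ labels T₂ ↔ _
    simp +contextual
  · show OptIso (restrictO (some T₂) (labelsO (remove T₁ X))) (remove T₁ X)
    rw [labelsO_remove, hl]
    exact h.symm
  · show OptIso (restrictO (some T₂) (labelsO (remove T₂ ∅))) (remove T₂ ∅)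
    rw [labelsO_remove]
    exact OptIso.refl _

theorem isLabelDisagreement_of_iso {T₁ T₂ : LTree α} {X : Finset α} (hT₁ : Good T₁)
    (hl : labels T₁ = labels T₂) (h : OptIso (remove T₁ X) (remove T₂ X)) :
    IsLabelDisagreement ![T₁, T₂] X := by
  refine ⟨remove T₁ X, goodO_restrict hT₁ _, ?_, Fin.forall_fin_two.2 ⟨?_, ?_⟩⟩
  · ext a
    simp [labelsO_remove, Fin.exists_fin_two, hl]
  · simpa [labelsO_remove, restrictO_remove] using OptIso.refl (remove T₁ X)
  · simpa [labelsO_remove, ← hl, restrictO_remove] using h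

theorem IsLeafDisagreement.remove_union_iso {T₁ T₂ : LTree α} {X : Fin 2 → Finset α}
    (hX : IsLeafDisagreement ![T₁, T₂] X) (hl : labels T₁ = labels T₂) :
    OptIso (remove T₁ (X 0 ∪ X 1)) (remove T₂ (X 0 ∪ X 1)) :=
  hX.remove_iso_remove (Fin.forall_fin_two.2 ⟨hl, rfl⟩)
    (Fin.forall_fin_two.2 ⟨Finset.subset_union_left, Finset.subset_union_right⟩) 0 1

theorem dLR_le_card_union {T₁ T₂ : LTree α} {X : Fin 2 → Finset α}
    (hX : IsLeafDisagreement ![T₁, T₂] X) (hl : labels T₁ = labels T₂)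
    (hX₀ : X 0 ⊆ labels T₁) (hX₁ : X 1 ⊆ labels T₂) : dLR T₁ T₂ ≤ (X 0 ∪ X 1).card :=
  dLR_le (Finset.union_subset_union hX₀ hX₁) (hX.remove_union_iso hl)

theorem dLR_le_MASTRL {T₁ T₂ : LTree α} (hl : labels T₁ = labels T₂) :
    dLR T₁ T₂ ≤ MASTRL ![T₁, T₂] := by
  obtain ⟨X, hX, hsum, hld⟩ := exists_sum_card_eq_MASTRL ![T₁, T₂]
  calc dLR T₁ T₂ ≤ (X 0 ∪ X 1).card := dLR_le_card_union hld hl (hX 0) (hX 1)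
    _ ≤ (X 0).card + (X 1).card := Finset.card_union_le _ _
    _ = MASTRL ![T₁, T₂] := by rw [← hsum, Fin.sum_univ_two]

theorem MASTRL_le_dLR {T₁ T₂ : LTree α} (hT₂ : Good T₂) (hl : labels T₁ = labels T₂) :
    MASTRL ![T₁, T₂] ≤ dLR T₁ T₂ := by
  obtain ⟨X, hX, hcard, hiso⟩ := exists_card_eq_dLR T₁ T₂
  have hX₁ : X ⊆ labels T₁ := by rwa [hl, Finset.union_self, ← hl] at hX
  simpa [Fin.sum_univ_two, hcard] using
    MASTRL_le (𝒯 := ![T₁, T₂]) (X := ![X, ∅]) (Fin.forall_fin_two.2 ⟨hX₁, Finset.empty_subset _⟩)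
      (isLeafDisagreement_of_iso hT₂ hl hiso)

end LTree

open LTree

/-- Lemma 8 of the paper.  For two trees `T₁, T₂` on the same
label set `𝒳`, `MASTRL {T₁,T₂} = d_LR(T₁,T₂)`, and every minimum-size
leaf-disagreement `(X₁', X₂')` has disjoint parts and is obtained by partitioning
a label-disagreement `X' = X₁' ∪ X₂'` of size `d_LR(T₁,T₂)`. -/
theorem mastrl_two_trees {α : Type u} [DecidableEq α]
    (𝒳 : Finset α) (T₁ T₂ : LTree α)
    (h₁ : IsTreeOn T₁ 𝒳) (h₂ : IsTreeOn T₂ 𝒳) :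
    MASTRL ![T₁, T₂] = dLR T₁ T₂ ∧
    ∀ X : Fin 2 → Finset α, (∀ i, X i ⊆ 𝒳) →
      IsLeafDisagreement ![T₁, T₂] X →
      (X 0).card + (X 1).card = MASTRL ![T₁, T₂] →
      X 0 ∩ X 1 = ∅ ∧
      IsLabelDisagreement ![T₁, T₂] (X 0 ∪ X 1) ∧
      (X 0 ∪ X 1).card = dLR T₁ T₂ := by
  have hl : labels T₁ = labels T₂ := h₁.2.trans h₂.2.symm
  have hMASTRL : MASTRL ![T₁, T₂] = dLR T₁ T₂ :=
    le_antisymm (MASTRL_le_dLR h₂.1 hl) (dLR_le_MASTRL hl)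
  refine ⟨hMASTRL, fun X hX hld hsum => ?_⟩
  have hcard : (X 0 ∪ X 1).card = dLR T₁ T₂ :=
    le_antisymm (hMASTRL ▸ hsum ▸ Finset.card_union_le _ _)
      (dLR_le_card_union hld hl (h₁.2 ▸ hX 0) (h₂.2 ▸ hX 1))
  have hunion := Finset.card_union_add_card_inter (X 0) (X 1)
  exact ⟨Finset.card_eq_zero.1 (by omega),
    isLabelDisagreement_of_iso h₁.1 hl (hld.remove_union_iso hl), hcard⟩
end

section
/- The function d_LR is a metric on the set of trees on a fixed finite label set 𝒳: for all trees T1, T2, T3 on 𝒳, d_LR(T1, T2) ≥ 0 with equality if and only if T1 = T2, d_LR(T1, T2) = d_LR(T2, T1), and d_LR(T1, T3) ≤ d_LR(T1, T2) + d_LR(T2, T3). -/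
/-!
Common framework: rooted binary trees with leaves bijectively labeled by a
finite label set, leaf removal, restriction, the leaf-removal distance `d_LR`,
compatibility, leaf-disagreements, triplets, LPR moves, etc.
-/

universe u

namespace LTree

variable {α : Type u} [DecidableEq α]

theorem iso_refl (t : LTree α) : Iso t t := by
  induction t with
  | leaf a => exact Iso.leaf a
  | node l r ihl ihr => exact Iso.node ihl ihr

theorem iso_symm {t₁ t₂ : LTree α} (h : Iso t₁ t₂) : Iso t₂ t₁ := by
  induction h with
  | leaf a => exact Iso.leaf a
  | node h1 h2 ih1 ih2 => exact Iso.node ih1 ih2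
  | swap h1 h2 ih1 ih2 => exact Iso.swap ih2 ih1

theorem iso_trans {t₁ t₂ t₃ : LTree α} (h12 : Iso t₁ t₂) (h23 : Iso t₂ t₃) :
    Iso t₁ t₃ := by
  induction h12 generalizing t₃ with
  | leaf a => exact h23
  | node h1 h2 ih1 ih2 =>
    cases h23 with
    | node g1 g2 => exact Iso.node (ih1 g1) (ih2 g2)
    | swap g1 g2 => exact Iso.swap (ih1 g1) (ih2 g2)
  | swap h1 h2 ih1 ih2 =>
    cases h23 with
    | node g1 g2 => exact Iso.swap (ih1 g2) (ih2 g1)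
    | swap g1 g2 => exact Iso.node (ih1 g2) (ih2 g1)

theorem optIso_symm {o₁ o₂ : Option (LTree α)} (h : OptIso o₁ o₂) :
    OptIso o₂ o₁ := by
  cases o₁ <;> cases o₂ <;> first | trivial | exact h.elim | exact iso_symm h

theorem optIso_trans {o₁ o₂ o₃ : Option (LTree α)} (h12 : OptIso o₁ o₂)
    (h23 : OptIso o₂ o₃) : OptIso o₁ o₃ := by
  cases o₁ <;> cases o₂ <;> cases o₃ <;>
    first | trivial | exact h12.elim | exact h23.elim | exact iso_trans h12 h23

/-- Combine two optional trees into one node. -/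
def nodeO : Option (LTree α) → Option (LTree α) → Option (LTree α)
  | some l, some r => some (node l r)
  | some l, none => some l
  | none, some r => some r
  | none, none => none

theorem restrict_node (l r : LTree α) (S : Finset α) :
    restrict (node l r) S = nodeO (restrict l S) (restrict r S) := by
  cases h1 : restrict l S <;> cases h2 : restrict r S <;>
    simp [restrict, nodeO, h1, h2]

theorem restrict_eq_none_iff (t : LTree α) (S : Finset α) :
    restrict t S = none ↔ Disjoint (labels t) S := by
  induction t with
  | leaf a =>
    by_cases h : a ∈ S <;> simp [restrict, labels, h, Finset.disjoint_left]
  | node l r ihl ihr =>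
    rw [restrict_node]
    cases h1 : restrict l S <;> cases h2 : restrict r S <;>
      simp_all [nodeO, labels, Finset.disjoint_union_left]

theorem restrict_of_subset {t : LTree α} {S : Finset α} (h : labels t ⊆ S) :
    restrict t S = some t := by
  induction t with
  | leaf a =>
    have : a ∈ S := h (by simp [labels])
    simp [restrict, this]
  | node l r ihl ihr =>
    rw [labels, Finset.union_subset_iff] at h
    rw [restrict_node, ihl h.1, ihr h.2]
    rfl

theorem restrictO_nodeO (a b : Option (LTree α)) (S : Finset α) :
    restrictO (nodeO a b) S = nodeO (restrictO a S) (restrictO b S) := by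
  cases a <;> cases b <;>
    simp [nodeO, restrictO, restrict_node] <;>
    (cases h : restrict _ S <;> simp [nodeO, h])

theorem restrict_restrict (t : LTree α) (S₁ S₂ : Finset α) :
    restrictO (restrict t S₁) S₂ = restrict t (S₁ ∩ S₂) := by
  induction t with
  | leaf a =>
    by_cases h1 : a ∈ S₁ <;> by_cases h2 : a ∈ S₂ <;>
      simp [restrict, restrictO, h1, h2, Finset.mem_inter]
  | node l r ihl ihr =>
    rw [restrict_node, restrictO_nodeO, ihl, ihr, ← restrict_node]

theorem optIso_nodeO {a b c d : Option (LTree α)} (h1 : OptIso a b)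
    (h2 : OptIso c d) : OptIso (nodeO a c) (nodeO b d) := by
  cases a <;> cases b <;> cases c <;> cases d <;>
    first | trivial | exact h1.elim | exact h2.elim | exact h1 | exact h2 |
      exact Iso.node h1 h2

theorem optIso_swapO {a b c d : Option (LTree α)} (h1 : OptIso a d)
    (h2 : OptIso c b) : OptIso (nodeO a c) (nodeO b d) := by
  cases a <;> cases b <;> cases c <;> cases d <;>
    first | trivial | exact h1.elim | exact h2.elim | exact h1 | exact h2 |
      exact Iso.swap h1 h2

theorem iso_restrict {t₁ t₂ : LTree α} (h : Iso t₁ t₂) (S : Finset α) :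
    OptIso (restrict t₁ S) (restrict t₂ S) := by
  induction h with
  | leaf a =>
    by_cases ha : a ∈ S <;> simp [restrict, ha, OptIso]
    exact Iso.leaf a
  | node h1 h2 ih1 ih2 =>
    rw [restrict_node, restrict_node]
    exact optIso_nodeO ih1 ih2
  | swap h1 h2 ih1 ih2 =>
    rw [restrict_node, restrict_node]
    exact optIso_swapO ih1 ih2

theorem optIso_restrictO {o₁ o₂ : Option (LTree α)} (h : OptIso o₁ o₂)
    (S : Finset α) : OptIso (restrictO o₁ S) (restrictO o₂ S) := by
  cases o₁ <;> cases o₂ <;>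
    first | trivial | exact h.elim | exact iso_restrict h S

theorem remove_empty (t : LTree α) : remove t ∅ = some t := by
  rw [remove, Finset.sdiff_empty]
  exact restrict_of_subset (subset_refl _)

theorem dLR_set_nonempty (T₁ T₂ : LTree α) :
    Set.Nonempty {n | ∃ X : Finset α, X ⊆ labels T₁ ∪ labels T₂ ∧
      X.card = n ∧ OptIso (remove T₁ X) (remove T₂ X)} := by
  refine ⟨(labels T₁ ∪ labels T₂).card, labels T₁ ∪ labels T₂,
    subset_refl _, rfl, ?_⟩
  have e1 : remove T₁ (labels T₁ ∪ labels T₂) = none := by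
    rw [remove, (restrict_eq_none_iff _ _)]
    simp [Finset.disjoint_left, Finset.mem_sdiff]
    tauto
  have e2 : remove T₂ (labels T₁ ∪ labels T₂) = none := by
    rw [remove, (restrict_eq_none_iff _ _)]
    simp [Finset.disjoint_left, Finset.mem_sdiff]
    tauto
  rw [e1, e2]
  trivial

end LTree

open LTree

/-- `d_LR` is a metric on the trees on a fixed label set `𝒳`:
nonnegative, zero exactly on equal trees, symmetric, and satisfying the
triangle inequality. -/
theorem dLR_is_metric {α : Type u} [DecidableEq α] (𝒳 : Finset α)
    (T₁ T₂ T₃ : LTree α)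
    (h₁ : IsTreeOn T₁ 𝒳) (h₂ : IsTreeOn T₂ 𝒳) (h₃ : IsTreeOn T₃ 𝒳) :
    0 ≤ dLR T₁ T₂ ∧
    (dLR T₁ T₂ = 0 ↔ Iso T₁ T₂) ∧
    dLR T₁ T₂ = dLR T₂ T₁ ∧
    dLR T₁ T₃ ≤ dLR T₁ T₂ + dLR T₂ T₃ := by
  obtain ⟨g₁, hl₁⟩ := h₁
  obtain ⟨g₂, hl₂⟩ := h₂
  obtain ⟨g₃, hl₃⟩ := h₃
  refine ⟨Nat.zero_le _, ?_, ?_, ?_⟩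
  · constructor
    · intro h
      have h0 : 0 ∈ {n | ∃ X : Finset α, X ⊆ labels T₁ ∪ labels T₂ ∧
          X.card = n ∧ OptIso (remove T₁ X) (remove T₂ X)} := by
        rw [← h]
        exact Nat.sInf_mem (dLR_set_nonempty T₁ T₂)
      obtain ⟨X, hXsub, hXcard, hXiso⟩ := h0
      rw [Finset.card_eq_zero] at hXcard
      subst hXcard
      rw [remove_empty, remove_empty] at hXiso
      exact hXiso
    · intro h
      refine Nat.eq_zero_of_le_zero (Nat.sInf_le ⟨∅, Finset.empty_subset _,
        Finset.card_empty, ?_⟩)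
      rw [remove_empty, remove_empty]
      exact h
  · unfold dLR
    congr 1
    ext n
    constructor
    · rintro ⟨X, hsub, hcard, hiso⟩
      exact ⟨X, by rwa [Finset.union_comm], hcard, optIso_symm hiso⟩
    · rintro ⟨X, hsub, hcard, hiso⟩
      exact ⟨X, by rwa [Finset.union_comm], hcard, optIso_symm hiso⟩
  · obtain ⟨X, hXsub, hXcard, hXiso⟩ := Nat.sInf_mem (dLR_set_nonempty T₁ T₂)
    obtain ⟨Y, hYsub, hYcard, hYiso⟩ := Nat.sInf_mem (dLR_set_nonempty T₂ T₃)
    rw [hl₁, hl₂, Finset.union_self] at hXsub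
    rw [hl₂, hl₃, Finset.union_self] at hYsub
    have hiso : OptIso (remove T₁ (X ∪ Y)) (remove T₃ (X ∪ Y)) := by
      have e : ∀ T : LTree α, labels T = 𝒳 →
          remove T (X ∪ Y) = restrict T ((𝒳 \ X) ∩ (𝒳 \ Y)) := by
        intro T hT
        rw [remove, hT, Finset.sdiff_union_distrib]
      have hX' : OptIso (restrict T₁ (𝒳 \ X)) (restrict T₂ (𝒳 \ X)) := by
        rw [remove, remove, hl₁, hl₂] at hXiso
        exact hXiso
      have hY' : OptIso (restrict T₂ (𝒳 \ Y)) (restrict T₃ (𝒳 \ Y)) := by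
        rw [remove, remove, hl₂, hl₃] at hYiso
        exact hYiso
      have k1 : OptIso (restrict T₁ ((𝒳 \ X) ∩ (𝒳 \ Y)))
          (restrict T₂ ((𝒳 \ X) ∩ (𝒳 \ Y))) := by
        rw [← restrict_restrict, ← restrict_restrict]
        exact optIso_restrictO hX' _
      have k2 : OptIso (restrict T₂ ((𝒳 \ X) ∩ (𝒳 \ Y)))
          (restrict T₃ ((𝒳 \ X) ∩ (𝒳 \ Y))) := by
        rw [Finset.inter_comm, ← restrict_restrict, ← restrict_restrict]
        exact optIso_restrictO hY' _
      rw [e T₁ hl₁, e T₃ hl₃]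
      exact optIso_trans k1 k2
    calc dLR T₁ T₃ ≤ (X ∪ Y).card := by
          refine Nat.sInf_le ⟨X ∪ Y, ?_, rfl, hiso⟩
          rw [hl₁, hl₃, Finset.union_self]
          exact Finset.union_subset hXsub hYsub
      _ ≤ X.card + Y.card := Finset.card_union_le X Y
      _ = dLR T₁ T₂ + dLR T₂ T₃ := by rw [hXcard, hYcard]; rfl
end
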